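/- arXiv:1301.5293 — 3 statements merged into one kernel-verified Lean document; each statement's English description precedes it below -/
import Mathlib

section
/- Let x, y be real numbers with 2 ≤ y ≤ x, and let α > 0 satisfy φ₁(α,y) + log x = 0, i.e., Σ_{p ≤ y, p prime} log p/(p^α − 1) = log x. Then α ≥ log(1 + (log 2)/(log x))/log 2 ≥ 1/(2 log x). -/
/-!
Only the prime `2` is needed: all terms of the saddle-point sum are nonnegative, so
`log 2 / (2 ^ α - 1) ≤ log x`, i.e. `2 ^ α ≥ 1 + t` with `t = log 2 / log x ∈ (0, 1]`.
Taking logarithms gives the first bound, and `log (1 + t) ≥ t / 2` on `[0, 2]` the second.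
-/

open Real

/-- The finite set of primes `p ≤ y`. -/
noncomputable def primesLE (y : ℝ) : Finset ℕ :=
  (Finset.range (⌊y⌋₊ + 1)).filter Nat.Prime

lemma two_mem_primesLE {y : ℝ} (hy : 2 ≤ y) : 2 ∈ primesLE y :=
  Finset.mem_filter.2 ⟨Finset.mem_range_succ_iff.2 (Nat.le_floor (by exact_mod_cast hy)),
    Nat.prime_two⟩

lemma log_div_rpow_sub_one_nonneg {p α : ℝ} (hp : 1 ≤ p) (hα : 0 ≤ α) :
    0 ≤ log p / (p ^ α - 1) :=
  div_nonneg (log_nonneg hp) (sub_nonneg.2 (one_le_rpow hp hα))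

lemma log_two_div_le_sum_primesLE {y α : ℝ} (hy : 2 ≤ y) (hα : 0 ≤ α) :
    log 2 / ((2 : ℝ) ^ α - 1) ≤ ∑ p ∈ primesLE y, log p / ((p : ℝ) ^ α - 1) := by
  have hnonneg : ∀ p ∈ primesLE y, 0 ≤ log p / ((p : ℝ) ^ α - 1) := fun p hp =>
    log_div_rpow_sub_one_nonneg (by exact_mod_cast (Finset.mem_filter.1 hp).2.one_lt.le) hα
  exact_mod_cast Finset.single_le_sum hnonneg (two_mem_primesLE hy)

lemma one_add_div_le_of_div_sub_one_le {a c L : ℝ} (ha : 1 < a) (hL : 0 < L)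
    (h : c / (a - 1) ≤ L) : 1 + c / L ≤ a := by
  have hc : c ≤ L * (a - 1) := (div_le_iff₀ (sub_pos.2 ha)).1 h
  have : c / L ≤ a - 1 := (div_le_iff₀' hL).2 hc
  linarith

lemma half_le_log_one_add {t : ℝ} (h0 : 0 ≤ t) (h2 : t ≤ 2) : t / 2 ≤ log (1 + t) :=
  calc t / 2 ≤ 2 * t / (t + 2) := by
        rw [div_le_div_iff₀ two_pos (by linarith)]
        nlinarith
    _ ≤ log (1 + t) := le_log_one_add_of_nonneg h0

/-- If `2 ≤ y ≤ x` and `α > 0` is the saddle point, i.e.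
`∑_{p ≤ y} log p/(p^α − 1) = log x`, then
`α ≥ log(1 + (log 2)/(log x))/log 2 ≥ 1/(2 log x)`. -/
theorem alpha_lower_bound (x y α : ℝ) (h2y : 2 ≤ y) (hyx : y ≤ x) (hα : 0 < α)
    (hsaddle : ∑ p ∈ primesLE y, Real.log p / ((p : ℝ) ^ α - 1) = Real.log x) :
    Real.log (1 + Real.log 2 / Real.log x) / Real.log 2 ≤ α ∧
    1 / (2 * Real.log x) ≤ Real.log (1 + Real.log 2 / Real.log x) / Real.log 2 := by
  have hlx : 0 < log x := log_pos (by linarith)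
  have hl2 : 0 < log 2 := log_pos one_lt_two
  set t := log 2 / log x with ht
  have ht1 : t ≤ 1 := (div_le_one hlx).2 (log_le_log two_pos (h2y.trans hyx))
  have hpow : 1 + t ≤ (2 : ℝ) ^ α :=
    one_add_div_le_of_div_sub_one_le (one_lt_rpow one_lt_two hα) hlx
      (hsaddle ▸ log_two_div_le_sum_primesLE h2y hα.le)
  refine ⟨?_, ?_⟩
  · rw [div_le_iff₀ hl2, ← log_rpow two_pos]
    exact log_le_log (by positivity) hpow
  · calc 1 / (2 * log x) = t / 2 / log 2 := by rw [ht]; field_simp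
      _ ≤ log (1 + t) / log 2 :=
        div_le_div_of_nonneg_right (half_le_log_one_add (by positivity) (by linarith)) hl2.le
end

section
/- Let u > 1 be real and let ξ > 0 satisfy e^ξ = 1 + u·ξ. Then 1 − 1/u ≤ ξ ≤ 2(u − 1). -/
/-- If `u > 1` and `ξ > 0` satisfies `e^ξ = 1 + uξ`, then `1 − 1/u ≤ ξ ≤ 2(u − 1)`. -/
theorem xi_bounds (u ξ : ℝ) (hu : 1 < u) (hξ : 0 < ξ)
    (h : Real.exp ξ = 1 + u * ξ) :
    1 - 1 / u ≤ ξ ∧ ξ ≤ 2 * (u - 1) := by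
  have hu0 : 0 < u := lt_trans one_pos hu
  constructor
  · rcases le_or_gt 1 ξ with h1 | h1
    · have : 1 - 1 / u ≤ 1 := by
        have : 0 < 1 / u := by positivity
        linarith
      linarith
    · -- ξ < 1 : use exp ξ ≤ 1/(1-ξ)
      have hneg : 1 - ξ ≤ Real.exp (-ξ) := by
        have := Real.add_one_le_exp (-ξ); linarith
      have hpos : 0 < 1 - ξ := by linarith
      have hmul : (1 + u * ξ) * (1 - ξ) ≤ 1 := by
        have h2 : Real.exp ξ * Real.exp (-ξ) = 1 := by
          rw [← Real.exp_add]; simp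
        calc (1 + u * ξ) * (1 - ξ) ≤ (1 + u * ξ) * Real.exp (-ξ) := by
              apply mul_le_mul_of_nonneg_left hneg; nlinarith
          _ = Real.exp ξ * Real.exp (-ξ) := by rw [h]
          _ = 1 := h2
      -- so u - 1 ≤ u ξ
      have hkey : u - 1 ≤ u * ξ := by nlinarith
      have heq : 1 - 1 / u = (u - 1) / u := by field_simp
      rw [heq, div_le_iff₀ hu0]
      linarith [mul_comm u ξ]
  · have hq := Real.quadratic_le_exp_of_nonneg hξ.le
    nlinarith
end

section
/- Let s > 0 be real and let N be a positive integer with N·s ≥ 2. Then Σ_{p prime} log p/(p^{Ns}·(p^s − 1)) ≤ 3/(s·2^{Ns}). -/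
open Real

/-- The sum of `1/p^2` over primes is at most `3/4`. -/
lemma primes_sq_inv_le : (∑' p : Nat.Primes, (1 : ℝ) / ((p : ℕ) : ℝ) ^ 2) ≤ 3 / 4 := by
  have hbasel : HasSum (fun n : ℕ => (1 : ℝ) / (n : ℝ) ^ 2) (π ^ 2 / 6) := hasSum_zeta_two
  have h := (hasSum_nat_add_iff' (f := fun n : ℕ => (1 : ℝ) / (n : ℝ) ^ 2) 2).mpr hbasel
  have hvals : ∑ i ∈ Finset.range 2, (1 : ℝ) / (i : ℝ) ^ 2 = 1 := by
    rw [Finset.sum_range_succ, Finset.sum_range_one]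
    norm_num
  rw [hvals] at h
  have h2 : HasSum (fun n : ℕ => (1 : ℝ) / ((n : ℝ) + 2) ^ 2) (π ^ 2 / 6 - 1) := by
    have heq : (fun n : ℕ => (1 : ℝ) / ((n : ℝ) + 2) ^ 2)
        = (fun n : ℕ => (1 : ℝ) / ((n + 2 : ℕ) : ℝ) ^ 2) := by
      funext n; push_cast; ring
    rw [heq]; exact h
  have hsum : Summable (fun p : Nat.Primes => (1 : ℝ) / ((p : ℕ) : ℝ) ^ 2) := by
    have := Nat.Primes.summable_rpow.mpr (by norm_num : (-2 : ℝ) < -1)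
    refine this.congr fun p => ?_
    rw [Real.rpow_neg (by positivity), Real.rpow_two, one_div]
  have hle : (∑' p : Nat.Primes, (1 : ℝ) / ((p : ℕ) : ℝ) ^ 2)
      ≤ ∑' n : ℕ, (1 : ℝ) / ((n : ℝ) + 2) ^ 2 := by
    refine Summable.tsum_le_tsum_of_inj (fun p : Nat.Primes => (p : ℕ) - 2) ?_ (fun n _ => by positivity)
      (fun p => ?_) hsum h2.summable
    · intro p q hpq
      have hp := p.2.two_le
      have hq := q.2.two_le
      simp only at hpq
      exact Subtype.ext (by omega)
    · have hp := p.2.two_le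
      have hcast : (((p : ℕ) - 2 : ℕ) : ℝ) + 2 = ((p : ℕ) : ℝ) := by
        have hn : ((p : ℕ) - 2) + 2 = (p : ℕ) := by omega
        exact_mod_cast congrArg (fun k : ℕ => (k : ℝ)) hn
      rw [hcast]
  refine hle.trans ?_
  rw [h2.tsum_eq]
  nlinarith [Real.pi_lt_d2, Real.pi_gt_three]

/-- For `s > 0` and `N` a positive integer with `Ns ≥ 2`,
`∑_p log p/(p^{Ns}(p^s − 1)) ≤ 3/(s·2^{Ns})`, the sum being over all primes. -/
theorem truncation_error_bound (s : ℝ) (N : ℕ) (hs : 0 < s) (hN : 0 < N)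
    (hNs : 2 ≤ (N : ℝ) * s) :
    (∑' p : Nat.Primes,
        Real.log (p : ℕ) / (((p : ℕ) : ℝ) ^ ((N : ℝ) * s) * (((p : ℕ) : ℝ) ^ s - 1)))
      ≤ 3 / (s * (2 : ℝ) ^ ((N : ℝ) * s)) := by
  set r : ℝ := (N : ℝ) * s with hr
  set c : ℝ := (1 / s) * (2 : ℝ) ^ (2 - r) with hc
  have hc0 : 0 < c := by positivity
  -- pointwise bound
  have key : ∀ p : Nat.Primes,
      Real.log (p : ℕ) / (((p : ℕ) : ℝ) ^ r * (((p : ℕ) : ℝ) ^ s - 1))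
        ≤ c * (1 / ((p : ℕ) : ℝ) ^ 2) := by
    intro p
    have hp2 : (2 : ℝ) ≤ ((p : ℕ) : ℝ) := by exact_mod_cast p.2.two_le
    have hp1 : (1 : ℝ) < ((p : ℕ) : ℝ) := by linarith
    have hp0 : (0 : ℝ) < ((p : ℕ) : ℝ) := by linarith
    have hlog : 0 < Real.log ((p : ℕ) : ℝ) := Real.log_pos hp1
    have hps : (1 : ℝ) < ((p : ℕ) : ℝ) ^ s :=
      (Real.one_lt_rpow_iff_of_pos hp0).mpr (Or.inl ⟨hp1, hs⟩)
    have hps0 : (0 : ℝ) < ((p : ℕ) : ℝ) ^ s - 1 := by linarith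
    have hpr : (0 : ℝ) < ((p : ℕ) : ℝ) ^ r := Real.rpow_pos_of_pos hp0 r
    have hp2pos : (0 : ℝ) < ((p : ℕ) : ℝ) ^ 2 := by positivity
    -- s * log p ≤ p^s - 1
    have h1 : s * Real.log ((p : ℕ) : ℝ) ≤ ((p : ℕ) : ℝ) ^ s - 1 := by
      rw [Real.rpow_def_of_pos hp0, mul_comm]
      linarith [Real.add_one_le_exp (Real.log ((p : ℕ) : ℝ) * s)]
    -- log p / (p^s - 1) ≤ 1/s
    have h2 : Real.log ((p : ℕ) : ℝ) / (((p : ℕ) : ℝ) ^ s - 1) ≤ 1 / s := by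
      rw [div_le_div_iff₀ hps0 hs]
      nlinarith
    -- 1/p^r ≤ 2^(2-r) / p^2
    have h3 : ((p : ℕ) : ℝ) ^ (2 - r) ≤ (2 : ℝ) ^ (2 - r) :=
      Real.rpow_le_rpow_of_nonpos two_pos hp2 (by linarith)
    have h4 : (1 : ℝ) / ((p : ℕ) : ℝ) ^ r ≤ (2 : ℝ) ^ (2 - r) * (1 / ((p : ℕ) : ℝ) ^ 2) := by
      have e1 : (1 : ℝ) / ((p : ℕ) : ℝ) ^ 2 = ((p : ℕ) : ℝ) ^ (-2 : ℝ) := by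
        rw [Real.rpow_neg hp0.le, Real.rpow_two, one_div]
      rw [e1, one_div, ← Real.rpow_neg hp0.le]
      have e2 : ((p : ℕ) : ℝ) ^ (-r) = ((p : ℕ) : ℝ) ^ (2 - r) * ((p : ℕ) : ℝ) ^ (-2 : ℝ) := by
        rw [← Real.rpow_add hp0]; ring_nf
      rw [e2]
      exact mul_le_mul_of_nonneg_right h3 (Real.rpow_pos_of_pos hp0 _).le
    calc Real.log ((p : ℕ) : ℝ) / (((p : ℕ) : ℝ) ^ r * (((p : ℕ) : ℝ) ^ s - 1))
        = (Real.log ((p : ℕ) : ℝ) / (((p : ℕ) : ℝ) ^ s - 1)) * (1 / ((p : ℕ) : ℝ) ^ r) := by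
          rw [mul_comm (((p : ℕ) : ℝ) ^ r), ← div_div, div_eq_mul_one_div]
      _ ≤ (1 / s) * ((2 : ℝ) ^ (2 - r) * (1 / ((p : ℕ) : ℝ) ^ 2)) :=
          mul_le_mul h2 h4 (one_div_nonneg.mpr hpr.le) (by positivity)
      _ = c * (1 / ((p : ℕ) : ℝ) ^ 2) := by rw [hc]; ring
  -- summability of the bound
  have hsum : Summable (fun p : Nat.Primes => (1 : ℝ) / ((p : ℕ) : ℝ) ^ 2) := by
    have := Nat.Primes.summable_rpow.mpr (by norm_num : (-2 : ℝ) < -1)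
    refine this.congr fun p => ?_
    rw [Real.rpow_neg (by positivity), Real.rpow_two, one_div]
  have hsumc : Summable (fun p : Nat.Primes => c * (1 / ((p : ℕ) : ℝ) ^ 2)) := hsum.mul_left c
  have hnonneg : ∀ p : Nat.Primes,
      0 ≤ Real.log (p : ℕ) / (((p : ℕ) : ℝ) ^ r * (((p : ℕ) : ℝ) ^ s - 1)) := by
    intro p
    have hp2 : (2 : ℝ) ≤ ((p : ℕ) : ℝ) := by exact_mod_cast p.2.two_le
    have hp1 : (1 : ℝ) < ((p : ℕ) : ℝ) := by linarith
    have hp0 : (0 : ℝ) < ((p : ℕ) : ℝ) := by linarith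
    have hps : (1 : ℝ) < ((p : ℕ) : ℝ) ^ s :=
      (Real.one_lt_rpow_iff_of_pos hp0).mpr (Or.inl ⟨hp1, hs⟩)
    have hps0 : (0 : ℝ) < ((p : ℕ) : ℝ) ^ s - 1 := by linarith
    have hpr : (0 : ℝ) < ((p : ℕ) : ℝ) ^ r := Real.rpow_pos_of_pos hp0 r
    exact div_nonneg (Real.log_nonneg hp1.le) (mul_nonneg hpr.le hps0.le)
  have hsumf : Summable (fun p : Nat.Primes =>
      Real.log (p : ℕ) / (((p : ℕ) : ℝ) ^ r * (((p : ℕ) : ℝ) ^ s - 1))) :=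
    Summable.of_nonneg_of_le hnonneg key hsumc
  have h2r : (0 : ℝ) < (2 : ℝ) ^ r := Real.rpow_pos_of_pos two_pos r
  calc (∑' p : Nat.Primes,
        Real.log (p : ℕ) / (((p : ℕ) : ℝ) ^ r * (((p : ℕ) : ℝ) ^ s - 1)))
      ≤ ∑' p : Nat.Primes, c * (1 / ((p : ℕ) : ℝ) ^ 2) := Summable.tsum_le_tsum key hsumf hsumc
    _ = c * ∑' p : Nat.Primes, (1 : ℝ) / ((p : ℕ) : ℝ) ^ 2 := tsum_mul_left
    _ ≤ c * (3 / 4) := mul_le_mul_of_nonneg_left primes_sq_inv_le hc0.le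
    _ = 3 / (s * (2 : ℝ) ^ r) := by
        rw [hc, Real.rpow_sub two_pos]
        have e : (2 : ℝ) ^ (2 : ℝ) = 4 := by
          rw [Real.rpow_two]; norm_num
        rw [e]
        field_simp
end
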